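/- Let h be a probability mass function on ℕ and p ∈ (0,1), and set f = T_p h. If f(n) > 0 for some n ∈ ℕ, then f(k) > 0 for every k ≤ n. Consequently, any pmf f on ℕ having a zero-gap — i.e., such that f(k) = 0 and f(n) > 0 for some k < n — is a top inverse: for every p ∈ (0,1) there is no pmf h with T_p h = f. -/

import Mathlib

/-!
Every binomial weight `C(n, m) p^m (1-p)^(n-m)` with `m ≤ n` is positive for `p ∈ (0,1)`, so
`T_p h (m)` is a convergent series of nonnegative terms that contains a positive term exactly
when `h` has mass at some `n ≥ m`. This condition is downward closed in `m`, which is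
incompatible with a zero-gap.
-/

open scoped BigOperators ENNReal

/-- `f` is a probability mass function on `ℕ`. -/
def IsPMF (f : ℕ → ℝ) : Prop := (∀ n, 0 ≤ f n) ∧ HasSum f 1

/-- The binomial subsampling (independent `p`-thinning) of `f`:
`(T_p f)(m) = ∑_{n ≥ m} f(n) * C(n,m) * p^m * (1-p)^(n-m)` (written with `n = m + k`). -/
noncomputable def thin (p : ℝ) (f : ℕ → ℝ) : ℕ → ℝ :=
  fun m => ∑' k : ℕ, f (m + k) * ((m + k).choose m : ℝ) * p ^ m * (1 - p) ^ k

lemma choose_mul_pow_mul_one_sub_pow_le_one {p : ℝ} (hp0 : 0 ≤ p) (hp1 : p ≤ 1) (m k : ℕ) :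
    ((m + k).choose m : ℝ) * p ^ m * (1 - p) ^ k ≤ 1 := by
  -- one term of the binomial expansion of `(p + (1 - p)) ^ (m + k) = 1`
  have hterm := Finset.single_le_sum (f := fun i => p ^ i * (1 - p) ^ (m + k - i) *
      ((m + k).choose i : ℝ)) (fun i _ => by have := sub_nonneg.2 hp1; positivity)
    (Finset.mem_range.2 (by omega : m < m + k + 1))
  rw [← add_pow, add_sub_cancel, one_pow, Nat.add_sub_cancel_left] at hterm
  linarith

section Thinning

variable {h : ℕ → ℝ} {p : ℝ}

lemma thin_term_nonneg (hh0 : ∀ n, 0 ≤ h n) (hp0 : 0 ≤ p) (hp1 : p ≤ 1) (m k : ℕ) :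
    0 ≤ h (m + k) * ((m + k).choose m : ℝ) * p ^ m * (1 - p) ^ k := by
  have := hh0 (m + k)
  have := sub_nonneg.2 hp1
  positivity

lemma summable_thin_term (hh0 : ∀ n, 0 ≤ h n) (hhs : Summable h) (hp0 : 0 ≤ p) (hp1 : p ≤ 1)
    (m : ℕ) : Summable fun k => h (m + k) * ((m + k).choose m : ℝ) * p ^ m * (1 - p) ^ k := by
  have hshift : Summable fun k => h (m + k) := by
    simpa only [add_comm m] using (summable_nat_add_iff m).2 hhs
  refine Summable.of_nonneg_of_le (thin_term_nonneg hh0 hp0 hp1 m) (fun k => ?_) hshift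
  calc h (m + k) * ((m + k).choose m : ℝ) * p ^ m * (1 - p) ^ k
      = h (m + k) * (((m + k).choose m : ℝ) * p ^ m * (1 - p) ^ k) := by ring
    _ ≤ h (m + k) * 1 := by
      gcongr
      · exact hh0 _
      · exact choose_mul_pow_mul_one_sub_pow_le_one hp0 hp1 m k
    _ = h (m + k) := mul_one _

lemma thin_pos_iff (hh0 : ∀ n, 0 ≤ h n) (hhs : Summable h) (hp : p ∈ Set.Ioo (0 : ℝ) 1)
    (m : ℕ) : 0 < thin p h m ↔ ∃ n, m ≤ n ∧ 0 < h n := by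
  obtain ⟨hp0, hp1⟩ := hp
  have hq : 0 < 1 - p := sub_pos.2 hp1
  constructor
  · intro hpos
    obtain ⟨k, hk⟩ : ∃ k, h (m + k) * ((m + k).choose m : ℝ) * p ^ m * (1 - p) ^ k ≠ 0 := by
      by_contra! hzero
      simp [thin, hzero] at hpos
    exact ⟨m + k, m.le_add_right k, (hh0 _).lt_of_ne' (by rintro h0; simp [h0] at hk)⟩
  · rintro ⟨n, hmn, hn⟩
    obtain ⟨k, rfl⟩ := Nat.exists_eq_add_of_le hmn
    have hchoose : (0 : ℝ) < (m + k).choose m := by exact_mod_cast Nat.choose_pos hmn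
    exact (summable_thin_term hh0 hhs hp0.le hp1.le m).tsum_pos
      (thin_term_nonneg hh0 hp0.le hp1.le m) k (by positivity)

lemma IsPMF.thin_pos_of_le (hh : IsPMF h) (hp : p ∈ Set.Ioo (0 : ℝ) 1) {k n : ℕ} (hkn : k ≤ n)
    (hn : 0 < thin p h n) : 0 < thin p h k := by
  obtain ⟨N, hnN, hN⟩ := (thin_pos_iff hh.1 hh.2.summable hp n).1 hn
  exact (thin_pos_iff hh.1 hh.2.summable hp k).2 ⟨N, hkn.trans hnN, hN⟩

end Thinning

/-- if `h` is a pmf on `ℕ`, `p ∈ (0,1)` and `f = T_p h`, then `f(n) > 0`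
implies `f(k) > 0` for all `k ≤ n`; consequently any pmf with a zero-gap (some `k < n`
with `f(k) = 0` and `f(n) > 0`) is a top inverse. -/
theorem thin_pos_downward_and_zero_gap_top_inverse (h : ℕ → ℝ) (hh : IsPMF h)
    (p : ℝ) (hp : p ∈ Set.Ioo (0 : ℝ) 1) :
    (∀ n : ℕ, 0 < thin p h n → ∀ k ≤ n, 0 < thin p h k) ∧
    (∀ f : ℕ → ℝ, IsPMF f → (∃ k n : ℕ, k < n ∧ f k = 0 ∧ 0 < f n) →
      ∀ q ∈ Set.Ioo (0 : ℝ) 1, ¬ ∃ h' : ℕ → ℝ, IsPMF h' ∧ thin q h' = f) := by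
  refine ⟨fun n hn k hkn => hh.thin_pos_of_le hp hkn hn, ?_⟩
  rintro f - ⟨k, n, hkn, hfk, hfn⟩ q hq ⟨h', hh', rfl⟩
  exact (hh'.thin_pos_of_le hq hkn.le hfn).ne' hfk
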